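/- arXiv:1104.1201 — 2 statements merged into one kernel-verified Lean document; each statement's English description precedes it below -/
import Mathlib

section
/- A function f : ℝ → ℂ taking values in the unit circle S¹ is a Lebesgue-measurable homomorphism (f(x+y) = f(x)·f(y) for all x, y ∈ ℝ) if and only if there exists a real number α ∈ ℝ such that f(x) = e^{i α x} for every x ∈ ℝ. -/
/-!
Weil's trick: integrating `f (x + t) = f x * f t` over `t ∈ [0, a]` gives
`f x * ∫₀ᵃ f = ∫ₓˣ⁺ᵃ f`. By the Lebesgue differentiation theorem some `∫₀ᵃ f` is nonzero, so `f` is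
a difference of values of its primitive divided by a constant: hence continuous, hence
differentiable with `f' = β f`. Thus `f x = exp (β x)`, and `‖f‖ = 1` forces `β` to be purely
imaginary.
-/

open MeasureTheory Real

theorem MeasureTheory.LocallyIntegrable.exists_intervalIntegral_ne_zero {E : Type*}
    [NormedAddCommGroup E] [NormedSpace ℝ E] [CompleteSpace E] {f : ℝ → E}
    (hf : LocallyIntegrable f volume) (hf0 : ¬ f =ᵐ[volume] 0) :
    ∃ a : ℝ, ∫ t in (0 : ℝ)..a, f t ≠ 0 := by
  by_contra! h
  apply hf0
  filter_upwards [LocallyIntegrable.ae_hasDerivAt_integral hf] with x hx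
  have hzero : (fun x => ∫ t in (0 : ℝ)..x, f t) = fun _ => 0 := funext h
  have hx0 := hx 0
  rw [hzero] at hx0
  exact hx0.unique (hasDerivAt_const x 0)

section MulOfAdd

variable {𝕜 : Type*} [NormedField 𝕜] [NormedAlgebra ℝ 𝕜] [CompleteSpace 𝕜] {f : ℝ → 𝕜}

omit [CompleteSpace 𝕜] in
theorem intervalIntegral_add_eq_mul_of_map_add_eq_mul (hmul : ∀ x y, f (x + y) = f x * f y)
    (x a : ℝ) : ∫ t in x..x + a, f t = f x * ∫ t in (0 : ℝ)..a, f t := by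
  calc ∫ t in x..x + a, f t = ∫ t in (0 : ℝ)..a, f (t + x) := by
        rw [intervalIntegral.integral_comp_add_right, zero_add, add_comm]
    _ = ∫ t in (0 : ℝ)..a, f x * f t := by simp only [add_comm _ x, hmul]
    _ = f x * ∫ t in (0 : ℝ)..a, f t := intervalIntegral.integral_const_mul _ _

omit [CompleteSpace 𝕜] in
theorem eq_primitive_sub_mul_inv_of_map_add_eq_mul (hmul : ∀ x y, f (x + y) = f x * f y)
    (hf : LocallyIntegrable f volume) {a : ℝ} (ha : ∫ t in (0 : ℝ)..a, f t ≠ 0) (x : ℝ) :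
    f x = ((∫ t in (0 : ℝ)..x + a, f t) - ∫ t in (0 : ℝ)..x, f t) *
      (∫ t in (0 : ℝ)..a, f t)⁻¹ := by
  have hint (s t : ℝ) : IntervalIntegrable f volume s t :=
    (hf.integrableOn_isCompact isCompact_uIcc).intervalIntegrable
  rw [intervalIntegral.integral_interval_sub_left (hint _ _) (hint _ _),
    intervalIntegral_add_eq_mul_of_map_add_eq_mul hmul, mul_inv_cancel_right₀ ha]

theorem continuous_of_map_add_eq_mul (hmul : ∀ x y, f (x + y) = f x * f y)
    (hf : LocallyIntegrable f volume) (hf0 : ¬ f =ᵐ[volume] 0) : Continuous f := by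
  obtain ⟨a, ha⟩ := hf.exists_intervalIntegral_ne_zero hf0
  have hG := intervalIntegral.continuous_primitive
    (fun s t => (hf.integrableOn_isCompact isCompact_uIcc).intervalIntegrable) 0
  rw [funext (eq_primitive_sub_mul_inv_of_map_add_eq_mul hmul hf ha)]
  fun_prop

theorem exists_hasDerivAt_eq_mul_of_map_add_eq_mul (hmul : ∀ x y, f (x + y) = f x * f y)
    (hf : LocallyIntegrable f volume) (hf0 : ¬ f =ᵐ[volume] 0) :
    ∃ β : 𝕜, ∀ x, HasDerivAt f (f x * β) x := by
  obtain ⟨a, ha⟩ := hf.exists_intervalIntegral_ne_zero hf0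
  have hcont := continuous_of_map_add_eq_mul hmul hf hf0
  have hG (y : ℝ) : HasDerivAt (fun y => ∫ t in (0 : ℝ)..y, f t) (f y) y :=
    intervalIntegral.integral_hasDerivAt_right (hcont.intervalIntegrable _ _)
      hcont.aestronglyMeasurable.stronglyMeasurableAtFilter hcont.continuousAt
  refine ⟨(f a - 1) * (∫ t in (0 : ℝ)..a, f t)⁻¹, fun x => ?_⟩
  convert (((hG (x + a)).comp_add_const x a).sub (hG x)).mul_const (∫ t in (0 : ℝ)..a, f t)⁻¹
    using 1
  · exact funext (eq_primitive_sub_mul_inv_of_map_add_eq_mul hmul hf ha)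
  · rw [hmul]
    ring

end MulOfAdd

theorem eq_mul_exp_of_hasDerivAt_mul {f : ℝ → ℂ} {β : ℂ} (hf : ∀ x, HasDerivAt f (f x * β) x)
    (x : ℝ) : f x = f 0 * Complex.exp (x * β) := by
  set g : ℝ → ℂ := fun y => f y * Complex.exp (-(y * β))
  have hg (y : ℝ) : HasDerivAt g 0 y := by
    have hexp :
        HasDerivAt (fun y : ℝ => Complex.exp (-(y * β))) (Complex.exp (-(y * β)) * -β) y := by
      simpa using ((hasDerivAt_id (y : ℂ)).mul_const β).neg.cexp.comp_ofReal
    exact ((hf y).mul hexp).congr_deriv (by ring)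
  have hconst : g x = g 0 := is_const_of_deriv_eq_zero (fun y => (hg y).differentiableAt)
    (fun y => (hg y).deriv) x 0
  simp only [g, Complex.ofReal_zero, zero_mul, neg_zero, Complex.exp_zero, mul_one] at hconst
  rw [← hconst, mul_assoc, ← Complex.exp_add, neg_add_cancel, Complex.exp_zero, mul_one]

theorem circle_valued_measurable_character_iff
    (f : ℝ → ℂ)
    (hcirc : ∀ x : ℝ, ‖f x‖ = 1) :
    (Measurable f ∧ ∀ x y : ℝ, f (x + y) = f x * f y) ↔
      ∃ α : ℝ, ∀ x : ℝ, f x = Complex.exp (Complex.I * α * x) := by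
  have hne (x : ℝ) : f x ≠ 0 := norm_ne_zero_iff.mp (by simp [hcirc x])
  constructor
  · rintro ⟨hmeas, hmul⟩
    have hf : LocallyIntegrable f volume :=
      (memLp_top_of_bound hmeas.aestronglyMeasurable 1
        (ae_of_all _ fun x => (hcirc x).le)).locallyIntegrable le_top
    have hf0 : ¬ f =ᵐ[volume] 0 := fun h => hne _ h.exists.choose_spec
    obtain ⟨β, hβ⟩ := exists_hasDerivAt_eq_mul_of_map_add_eq_mul hmul hf hf0
    have h0 : f 0 = 1 := by simpa [hne 0] using hmul 0 0
    have hexp (x : ℝ) : f x = Complex.exp (x * β) := by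
      rw [eq_mul_exp_of_hasDerivAt_mul hβ, h0, one_mul]
    have hre : β.re = 0 := by
      simpa [hexp, Complex.norm_exp] using hcirc 1
    refine ⟨β.im, fun x => ?_⟩
    rw [hexp]
    congr 1
    apply Complex.ext <;> simp [hre, mul_comm]
  · rintro ⟨α, hα⟩
    rw [funext hα]
    refine ⟨by fun_prop, fun x y => ?_⟩
    rw [← Complex.exp_add]
    push_cast
    ring_nf
end

section
/- Let n be a positive natural number. A function f : ℝⁿ → ℂ taking values in the unit circle S¹ is a Lebesgue-measurable homomorphism (f(x+y) = f(x)·f(y) for all x, y ∈ ℝⁿ) if and only if there exists α ∈ ℝⁿ such that f(x) = e^{i ⟨α, x⟩} for every x ∈ ℝⁿ, where ⟨α, x⟩ = α₁x₁ + ⋯ + αₙxₙ. -/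
/-!
A measurable character `ψ` of `ℝ` with `|ψ| = 1` is locally integrable and nowhere zero, so by
Lebesgue differentiation some `c = ∫₀ᵃ ψ` is nonzero. Translating the integral gives
`ψ x * c = ∫ₓ^{x+a} ψ`, a difference of primitives; hence `ψ` is continuous, then differentiable
with `ψ' = k ψ`, so `ψ t = exp (k t)`, and `|ψ| = 1` forces `k ∈ iℝ`. On `ℝⁿ`, apply this on each
coordinate axis and multiply.
-/

open MeasureTheory

namespace MeasureTheory.LocallyIntegrable

variable {E : Type*} [NormedAddCommGroup E] {f : ℝ → E}

theorem intervalIntegrable (hf : LocallyIntegrable f volume) (a b : ℝ) :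
    IntervalIntegrable f volume a b :=
  (hf.integrableOn_isCompact isCompact_uIcc).intervalIntegrable

theorem exists_intervalIntegral_ne_zero_s7 [NormedSpace ℝ E] [CompleteSpace E]
    (hf : LocallyIntegrable f volume) (hf₀ : ∀ x, f x ≠ 0) :
    ∃ a, ∫ t in (0 : ℝ)..a, f t ≠ 0 := by
  by_contra! h
  obtain ⟨x, hx⟩ := (_root_.LocallyIntegrable.ae_hasDerivAt_integral hf).exists
  have hx₀ := hx 0
  simp only [h] at hx₀
  exact hf₀ x (hx₀.unique (hasDerivAt_const x 0))

end MeasureTheory.LocallyIntegrable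

theorem eq_mul_exp_of_hasDerivAt_mul_s7 {g : ℝ → ℂ} {k : ℂ} (hg : ∀ x, HasDerivAt g (k * g x) x)
    (x : ℝ) : g x = g 0 * Complex.exp (k * x) := by
  have hder (y : ℝ) : HasDerivAt (fun y : ℝ => g y * Complex.exp (-(k * y))) 0 y := by
    have hexp : HasDerivAt (fun y : ℝ => Complex.exp (-(k * y)))
        (Complex.exp (-(k * y)) * -k) y := by
      simpa using ((Complex.ofRealCLM.hasDerivAt (x := y)).const_mul k).neg.cexp
    refine ((hg y).fun_mul hexp).congr_deriv ?_
    ring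
  have hconst := is_const_of_deriv_eq_zero (fun y => (hder y).differentiableAt)
    (fun y => (hder y).deriv) x 0
  simp only [Complex.ofReal_zero, mul_zero, neg_zero, Complex.exp_zero, mul_one,
    Complex.exp_neg] at hconst
  rw [← hconst, mul_assoc, inv_mul_cancel₀ (Complex.exp_ne_zero _), mul_one]

namespace AddChar

theorem map_sum_eq_prod {ι A M : Type*} [AddCommMonoid A] [CommMonoid M]
    (ψ : AddChar A M) (s : Finset ι) (f : ι → A) : ψ (∑ i ∈ s, f i) = ∏ i ∈ s, ψ (f i) := by
  classical
  induction s using Finset.induction_on with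
  | empty => simp
  | insert j s hj ih => rw [Finset.sum_insert hj, Finset.prod_insert hj, map_add_eq_mul, ih]

section IntervalIntegral

variable {𝕜 : Type*} [NormedField 𝕜] [NormedAlgebra ℝ 𝕜] (ψ : AddChar ℝ 𝕜)

theorem intervalIntegral_add_left (x a : ℝ) :
    ∫ t in x..x + a, ψ t = ψ x * ∫ t in (0 : ℝ)..a, ψ t := by
  simp_rw [← intervalIntegral.integral_const_mul, ← map_add_eq_mul]
  simp [intervalIntegral.integral_comp_add_left]

variable {ψ} {a : ℝ}

theorem eq_intervalIntegral_sub_div (hψ : LocallyIntegrable ψ volume)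
    (ha : ∫ t in (0 : ℝ)..a, ψ t ≠ 0) :
    ⇑ψ = fun x => ((∫ t in (0 : ℝ)..x + a, ψ t) - ∫ t in (0 : ℝ)..x, ψ t) /
      ∫ t in (0 : ℝ)..a, ψ t := by
  funext x
  rw [intervalIntegral.integral_interval_sub_left (hψ.intervalIntegrable _ _)
    (hψ.intervalIntegrable _ _), intervalIntegral_add_left, mul_div_cancel_right₀ _ ha]

theorem continuous_of_intervalIntegral_ne_zero (hψ : LocallyIntegrable ψ volume)
    (ha : ∫ t in (0 : ℝ)..a, ψ t ≠ 0) : Continuous ψ := by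
  have hF := intervalIntegral.continuous_primitive hψ.intervalIntegrable 0
  rw [eq_intervalIntegral_sub_div hψ ha]
  fun_prop

theorem hasDerivAt_of_intervalIntegral_ne_zero [CompleteSpace 𝕜]
    (hψ : LocallyIntegrable ψ volume) (ha : ∫ t in (0 : ℝ)..a, ψ t ≠ 0) (x : ℝ) :
    HasDerivAt ψ ((ψ a - 1) / (∫ t in (0 : ℝ)..a, ψ t) * ψ x) x := by
  have hF := (continuous_of_intervalIntegral_ne_zero hψ ha).integral_hasStrictDerivAt 0
  have h := (((hF (x + a)).hasDerivAt.comp_add_const x a).fun_sub (hF x).hasDerivAt).div_const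
    (∫ t in (0 : ℝ)..a, ψ t)
  rw [map_add_eq_mul] at h
  refine (h.congr_of_eventuallyEq (.of_eq (eq_intervalIntegral_sub_div hψ ha))).congr_deriv ?_
  ring

end IntervalIntegral

theorem exists_eq_exp_of_measurable (ψ : AddChar ℝ ℂ) (hψ : Measurable ψ)
    (hnorm : ∀ t, ‖ψ t‖ = 1) : ∃ α : ℝ, ∀ t, ψ t = Complex.exp (Complex.I * (α * t : ℝ)) := by
  have hloc : LocallyIntegrable ψ volume :=
    (memLp_top_of_bound hψ.aestronglyMeasurable 1
      (.of_forall fun t => (hnorm t).le)).locallyIntegrable le_top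
  obtain ⟨a, ha⟩ := hloc.exists_intervalIntegral_ne_zero_s7 fun t h => by simpa [h] using hnorm t
  set k := (ψ a - 1) / ∫ t in (0 : ℝ)..a, ψ t
  have hexp (t : ℝ) : ψ t = Complex.exp (k * t) := by
    simpa using eq_mul_exp_of_hasDerivAt_mul_s7 (hasDerivAt_of_intervalIntegral_ne_zero hloc ha) t
  have hk : k.re = 0 := by
    simpa [hexp, Complex.norm_exp] using hnorm 1
  refine ⟨k.im, fun t => ?_⟩
  rw [hexp t]
  congr 1
  apply Complex.ext <;> simp [hk]

theorem exists_eq_exp_sum_mul_of_measurable {ι : Type*} [Fintype ι]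
    (ψ : AddChar (ι → ℝ) ℂ) (hψ : Measurable ψ) (hnorm : ∀ x, ‖ψ x‖ = 1) :
    ∃ α : ι → ℝ, ∀ x, ψ x = Complex.exp (Complex.I * (∑ j, α j * x j : ℝ)) := by
  classical
  have hcoord (j : ι) : ∃ a : ℝ, ∀ t : ℝ,
      ψ (Pi.single j t) = Complex.exp (Complex.I * (a * t : ℝ)) :=
    (ψ.compAddMonoidHom (AddMonoidHom.single _ j)).exists_eq_exp_of_measurable
      (hψ.comp (continuous_single j).measurable) fun t => hnorm _
  choose α hα using hcoord
  refine ⟨α, fun x => ?_⟩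
  calc ψ x = ∏ j, ψ (Pi.single j (x j)) := by
        rw [← ψ.map_sum_eq_prod, Finset.univ_sum_single]
    _ = Complex.exp (Complex.I * (∑ j, α j * x j : ℝ)) := by
        simp_rw [hα, ← Complex.exp_sum, ← Finset.mul_sum]
        push_cast
        rfl

end AddChar

theorem multidim_circle_valued_measurable_character_iff_general
    (n : ℕ)
    (f : (Fin n → ℝ) → ℂ)
    (hcirc : ∀ x : Fin n → ℝ, ‖f x‖ = 1) :
    (Measurable f ∧ ∀ x y : Fin n → ℝ, f (x + y) = f x * f y) ↔
      ∃ α : Fin n → ℝ, ∀ x : Fin n → ℝ,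
        f x = Complex.exp (Complex.I * (∑ j, α j * x j : ℝ)) := by
  constructor
  · rintro ⟨hm, hadd⟩
    have hf₀ : f 0 = 1 := by
      have hne : f 0 ≠ 0 := fun h₀ => by simpa [h₀] using hcirc 0
      have h := hadd 0 0
      rw [add_zero, eq_comm] at h
      exact (mul_eq_left₀ hne).mp h
    exact AddChar.exists_eq_exp_sum_mul_of_measurable ⟨f, hf₀, hadd⟩ hm hcirc
  · rintro ⟨α, hα⟩
    rw [funext hα]
    refine ⟨by fun_prop, fun x y => ?_⟩
    simp [mul_add, Finset.sum_add_distrib, Complex.exp_add]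

theorem multidim_circle_valued_measurable_character_iff
    (n : ℕ) (hn : 0 < n)
    (f : (Fin n → ℝ) → ℂ)
    (hcirc : ∀ x : Fin n → ℝ, ‖f x‖ = 1) :
    (Measurable f ∧ ∀ x y : Fin n → ℝ, f (x + y) = f x * f y) ↔
      ∃ α : Fin n → ℝ, ∀ x : Fin n → ℝ,
        f x = Complex.exp (Complex.I * (∑ j, α j * x j : ℝ)) :=
  multidim_circle_valued_measurable_character_iff_general n f hcirc
end
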